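/- On the set of 1-Lipschitz maps ℝ → X into a metric space X, convergence with respect to the metric d_FS(c,c') = ∫_ℝ d_X(c(t),c'(t)) 2e^{−|t|} dt is equivalent to uniform convergence on compact subsets of ℝ: a sequence cₙ satisfies d_FS(cₙ, c) → 0 if and only if sup_{t ∈ [−R,R]} d_X(cₙ(t), c(t)) → 0 for every R > 0. -/

import Mathlib

/-- The flow space metric on 1-Lipschitz maps `ℝ → X`. -/
noncomputable def dFS {X : Type*} [MetricSpace X] (c c' : ℝ → X) : ℝ :=
  ∫ t : ℝ, dist (c t) (c' t) * (2 * Real.exp (-|t|))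

/-!
Both directions rest on the estimate `d(c₁ t, c₂ t) ≤ d(c₁ s, c₂ s) + 2|t - s|` for 1-Lipschitz
maps. Taking `s = 0`, the integrands of `d_FS(cₙ, c)` are dominated by the integrable function
`(1 + 2|t|) · 2e^{-|t|}` as soon as `d(cₙ 0, c 0) ≤ 1`, so pointwise convergence already gives
`d_FS(cₙ, c) → 0` by dominated convergence. Conversely, if `d(cₙ t₀, c t₀) ≥ ε` with `|t₀| ≤ R`,
then `d(cₙ t, c t) ≥ ε/2` on `[t₀, t₀ + ε/4]`, which forces `d_FS(cₙ, c) ≥ ε²/4 · e^{-(R + ε/4)}`.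
-/

open MeasureTheory Set Filter Real Topology

lemma integrable_abs_rpow_mul_exp_neg_abs {s : ℝ} (hs : -1 < s) :
    Integrable fun t : ℝ => |t| ^ s * exp (-|t|) := by
  -- A non-integrable function has integral `0`, while this one would have integral `2 Γ(s + 1)`.
  refine .of_integral_ne_zero ?_
  have hGamma := integral_rpow_mul_exp_neg_mul_Ioi (a := s + 1) (by linarith) one_pos
  simp only [add_sub_cancel_right, one_mul, div_one, one_rpow] at hGamma
  rw [integral_comp_abs (f := fun x => x ^ s * exp (-x)), hGamma]
  exact mul_ne_zero two_ne_zero (Gamma_pos_of_pos (by linarith)).ne'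

lemma integrable_affine_abs_mul_two_exp_neg_abs (a b : ℝ) :
    Integrable fun t : ℝ => (a + b * |t|) * (2 * exp (-|t|)) := by
  have h₀ := integrable_abs_rpow_mul_exp_neg_abs (s := 0) (by norm_num)
  have h₁ := integrable_abs_rpow_mul_exp_neg_abs (s := 1) (by norm_num)
  simp only [rpow_zero, one_mul, rpow_one] at h₀ h₁
  convert ((h₀.const_mul a).add (h₁.const_mul b)).const_mul 2 using 2 with t
  simp only [Pi.add_apply]
  ring

lemma LipschitzWith.dist_le_dist_add_two_mul_dist {α X : Type*} [PseudoMetricSpace α]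
    [PseudoMetricSpace X] {f g : α → X} (hf : LipschitzWith 1 f) (hg : LipschitzWith 1 g)
    (x y : α) : dist (f x) (g x) ≤ dist (f y) (g y) + 2 * dist x y := by
  have hfxy : dist (f x) (f y) ≤ dist x y := by simpa using hf.dist_le_mul x y
  have hgyx : dist (g y) (g x) ≤ dist x y := by simpa [dist_comm] using hg.dist_le_mul y x
  linarith [dist_triangle4 (f x) (f y) (g y) (g x)]

section Integrand

variable {X : Type*} [PseudoMetricSpace X] {c₁ c₂ : ℝ → X}

lemma norm_dist_mul_two_exp_neg_abs_le (h₁ : LipschitzWith 1 c₁) (h₂ : LipschitzWith 1 c₂)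
    {B : ℝ} (hB : dist (c₁ 0) (c₂ 0) ≤ B) (t : ℝ) :
    ‖dist (c₁ t) (c₂ t) * (2 * exp (-|t|))‖ ≤ (B + 2 * |t|) * (2 * exp (-|t|)) := by
  have hdist := h₁.dist_le_dist_add_two_mul_dist h₂ t 0
  rw [Real.dist_eq, sub_zero] at hdist
  rw [norm_of_nonneg (by positivity)]
  gcongr
  linarith

lemma integrable_dist_mul_two_exp_neg_abs (h₁ : LipschitzWith 1 c₁) (h₂ : LipschitzWith 1 c₂) :
    Integrable fun t => dist (c₁ t) (c₂ t) * (2 * exp (-|t|)) :=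
  (integrable_affine_abs_mul_two_exp_neg_abs _ 2).mono'
    ((h₁.continuous.dist h₂.continuous).mul (by fun_prop)).aestronglyMeasurable
    (.of_forall (norm_dist_mul_two_exp_neg_abs_le h₁ h₂ le_rfl))

end Integrand

section Convergence

variable {ι X : Type*} [MetricSpace X] {l : Filter ι} {cn : ι → ℝ → X} {c : ℝ → X}

lemma sq_div_four_mul_exp_le_dFS {c₁ c₂ : ℝ → X} (h₁ : LipschitzWith 1 c₁)
    (h₂ : LipschitzWith 1 c₂) {t₀ R ε : ℝ} (hε : 0 ≤ ε) (ht₀ : |t₀| ≤ R)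
    (hd : ε ≤ dist (c₁ t₀) (c₂ t₀)) :
    ε ^ 2 / 4 * exp (-(R + ε / 4)) ≤ dFS c₁ c₂ := by
  have hint := integrable_dist_mul_two_exp_neg_abs h₁ h₂
  have hlower : ∀ t ∈ Icc t₀ (t₀ + ε / 4),
      ε / 2 * (2 * exp (-(R + ε / 4))) ≤ dist (c₁ t) (c₂ t) * (2 * exp (-|t|)) := by
    rintro t ⟨ht₀t, ht⟩
    have hdist := h₁.dist_le_dist_add_two_mul_dist h₂ t₀ t
    rw [Real.dist_eq, abs_of_nonpos (by linarith)] at hdist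
    have habs : |t| ≤ R + ε / 4 := abs_le.2 ⟨by linarith [(abs_le.1 ht₀).1], by
      linarith [(abs_le.1 ht₀).2]⟩
    gcongr
    linarith
  calc ε ^ 2 / 4 * exp (-(R + ε / 4))
      = volume.real (Icc t₀ (t₀ + ε / 4)) • (ε / 2 * (2 * exp (-(R + ε / 4)))) := by
        rw [volume_real_Icc_of_le (by linarith), smul_eq_mul]
        ring
    _ ≤ ∫ t in Icc t₀ (t₀ + ε / 4), dist (c₁ t) (c₂ t) * (2 * exp (-|t|)) :=
        setIntegral_ge_of_const_le measurableSet_Icc measure_Icc_lt_top.ne hlower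
          hint.integrableOn
    _ ≤ dFS c₁ c₂ := setIntegral_le_integral hint (.of_forall fun t => by positivity)

lemma tendstoUniformlyOn_Icc_of_tendsto_dFS (hcn : ∀ n, LipschitzWith 1 (cn n))
    (hc : LipschitzWith 1 c) (h : Tendsto (fun n => dFS (cn n) c) l (𝓝 0)) (R : ℝ) :
    TendstoUniformlyOn cn c l (Icc (-R) R) := by
  refine Metric.tendstoUniformlyOn_iff.2 fun ε hε => ?_
  have hgap : 0 < ε ^ 2 / 4 * exp (-(R + ε / 4)) := by positivity
  filter_upwards [h.eventually (gt_mem_nhds hgap)] with n hn t ht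
  by_contra! hfar
  rw [dist_comm] at hfar
  exact hn.not_ge (sq_div_four_mul_exp_le_dFS (hcn n) hc hε.le (abs_le.2 ht) hfar)

lemma tendsto_dFS_of_tendsto_pointwise [l.IsCountablyGenerated]
    (hcn : ∀ n, LipschitzWith 1 (cn n)) (hc : LipschitzWith 1 c)
    (h : ∀ t, Tendsto (fun n => cn n t) l (𝓝 (c t))) :
    Tendsto (fun n => dFS (cn n) c) l (𝓝 0) := by
  have hnear : ∀ᶠ n in l, dist (cn n 0) (c 0) ≤ 1 :=
    (Metric.tendsto_nhds.1 (h 0) 1 one_pos).mono fun _ => le_of_lt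
  have hlim : ∀ t, Tendsto (fun n => dist (cn n t) (c t) * (2 * exp (-|t|))) l (𝓝 0) := by
    intro t
    simpa using (tendsto_iff_dist_tendsto_zero.1 (h t)).mul_const (2 * exp (-|t|))
  simpa [dFS] using tendsto_integral_filter_of_dominated_convergence _
    (.of_forall fun n => (integrable_dist_mul_two_exp_neg_abs (hcn n) hc).aestronglyMeasurable)
    (hnear.mono fun n hn => .of_forall (norm_dist_mul_two_exp_neg_abs_le (hcn n) hc hn))
    (integrable_affine_abs_mul_two_exp_neg_abs 1 2) (.of_forall hlim)

end Convergence

/-- For 1-Lipschitz maps `ℝ → X`, convergence in the metric `d_FS` is equivalent to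
uniform convergence on compact subsets of `ℝ`. -/
theorem dFS_tendsto_iff_tendstoUniformlyOn {X : Type*} [MetricSpace X]
    (cn : ℕ → ℝ → X) (c : ℝ → X)
    (hcn : ∀ n, LipschitzWith 1 (cn n)) (hc : LipschitzWith 1 c) :
    Filter.Tendsto (fun n => dFS (cn n) c) Filter.atTop (nhds 0) ↔
      ∀ R > (0 : ℝ), TendstoUniformlyOn cn c Filter.atTop (Set.Icc (-R) R) := by
  refine ⟨fun h R _ => tendstoUniformlyOn_Icc_of_tendsto_dFS hcn hc h R, fun h => ?_⟩
  refine tendsto_dFS_of_tendsto_pointwise hcn hc fun t => ?_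
  exact (h (|t| + 1) (by positivity)).tendsto_at
    ⟨by linarith [neg_abs_le t], by linarith [le_abs_self t]⟩
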